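/- arXiv:2109.05355 — 5 statements merged into one kernel-verified Lean document; each statement's English description precedes it below -/
import Mathlib

section
/- Let ω, ω', ω'' be complex numbers of modulus 1 with ω·ω'·ω'' = −1. Then |Arg ω| + |Arg ω'| + |Arg ω''| ≥ π, where Arg denotes the principal argument valued in (−π, π]. Moreover, equality holds if and only if either 1 ∈ {ω, ω', ω''}, or the imaginary parts of ω, ω', ω'' are all strictly positive, or all strictly negative. -/
/-!
Since `ω ω' ω'' = -1`, the three arguments sum to `π` modulo `2π`; as each lies in `(-π, π]`,
the sum is `-π`, `π` or `3π`. Hence `|Arg ω| + |Arg ω'| + |Arg ω''| ≥ |Arg ω + Arg ω' + Arg ω''| ≥ π`,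
and equality forces the sum to be `±π` with all three arguments of the same sign. Unwinding this
with the bounds on the arguments gives the stated cases, since for a unit complex number `Arg = 0`
means the number is `1`, and the sign of `Arg` is the sign of the imaginary part.
-/

open Real

namespace Complex

lemma im_pos_iff_arg_pos_and_arg_lt_pi (z : ℂ) : 0 < z.im ↔ 0 < arg z ∧ arg z < π := by
  grind [arg_nonneg_iff, arg_eq_zero_iff, arg_lt_pi_iff]

lemma arg_eq_zero_iff_of_norm_eq_one {z : ℂ} (hz : ‖z‖ = 1) : arg z = 0 ↔ z = 1 := by
  refine ⟨fun h => ?_, fun h => h ▸ arg_one⟩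
  rw [← norm_mul_exp_arg_mul_I z, hz, h]
  simp

lemma coe_arg_add_arg_add_arg_of_mul_mul_eq_neg_one {ω ω' ω'' : ℂ} (hprod : ω * ω' * ω'' = -1) :
    ((arg ω + arg ω' + arg ω'' : ℝ) : Real.Angle) = π := by
  have hω'' : ω'' ≠ 0 := by rintro rfl; simp at hprod
  have hωω' : ω * ω' ≠ 0 := by rintro h; simp [h] at hprod
  have hω : ω ≠ 0 := left_ne_zero_of_mul hωω'
  have hω' : ω' ≠ 0 := right_ne_zero_of_mul hωω'
  rw [Real.Angle.coe_add, Real.Angle.coe_add, ← arg_mul_coe_angle hω hω',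
    ← arg_mul_coe_angle hωω' hω'', hprod, arg_neg_one]

end Complex

section abs

variable {G : Type*} [AddCommGroup G] [LinearOrder G] [IsOrderedAddMonoid G]

lemma abs_add_abs_add_abs_eq_add_iff (a b c : G) :
    |a| + |b| + |c| = a + b + c ↔ 0 ≤ a ∧ 0 ≤ b ∧ 0 ≤ c := by
  grind

lemma abs_add_abs_add_abs_eq_neg_add_iff (a b c : G) :
    |a| + |b| + |c| = -(a + b + c) ↔ a ≤ 0 ∧ b ≤ 0 ∧ c ≤ 0 := by
  grind

end abs

lemma eq_neg_pi_or_eq_pi_or_eq_three_pi_of_coe_eq_pi {s : ℝ} (hlo : -(3 * π) < s)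
    (hhi : s ≤ 3 * π) (h : (s : Real.Angle) = π) : s = -π ∨ s = π ∨ s = 3 * π := by
  obtain ⟨n, hn⟩ := Real.Angle.angle_eq_iff_two_pi_dvd_sub.mp h
  have hn_lo : -2 < n := by
    have : (-2 : ℝ) < n := by nlinarith [pi_pos]
    exact_mod_cast this
  have hn_hi : n < 2 := by
    have : (n : ℝ) < 2 := by nlinarith [pi_pos]
    exact_mod_cast this
  interval_cases n <;> push_cast at hn <;> grind

theorem pi_le_abs_add_abs_add_abs_and_eq_iff {a b c : ℝ} (ha : a ∈ Set.Ioc (-π) π)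
    (hb : b ∈ Set.Ioc (-π) π) (hc : c ∈ Set.Ioc (-π) π)
    (h : ((a + b + c : ℝ) : Real.Angle) = π) :
    π ≤ |a| + |b| + |c| ∧
    (|a| + |b| + |c| = π ↔
      (a = 0 ∨ b = 0 ∨ c = 0) ∨
      ((0 < a ∧ a < π) ∧ (0 < b ∧ b < π) ∧ (0 < c ∧ c < π)) ∨
      (a < 0 ∧ b < 0 ∧ c < 0)) := by
  obtain ⟨ha₀, ha₁⟩ := ha
  obtain ⟨hb₀, hb₁⟩ := hb
  obtain ⟨hc₀, hc₁⟩ := hc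
  have hπ := pi_pos
  have hsum := eq_neg_pi_or_eq_pi_or_eq_three_pi_of_coe_eq_pi (s := a + b + c)
    (by linarith) (by linarith) h
  refine ⟨?_, ?_⟩
  · calc π ≤ |a + b + c| := by rcases hsum with hs | hs | hs <;> rw [hs] <;> grind
      _ ≤ |a| + |b| + |c| := abs_add_three a b c
  rcases hsum with hs | hs | hs
  · rw [show π = -(a + b + c) by linarith, abs_add_abs_add_abs_eq_neg_add_iff]
    grind
  · rw [show π = a + b + c by linarith, abs_add_abs_add_abs_eq_add_iff]
    grind
  · obtain ⟨rfl, rfl, rfl⟩ : a = π ∧ b = π ∧ c = π := by grind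
    rw [abs_of_pos hπ]
    grind

/-- For unit complex numbers `ω, ω', ω''` with `ω·ω'·ω'' = −1`, one has
`|Arg ω| + |Arg ω'| + |Arg ω''| ≥ π`, with equality iff `1` is among the angles or all three
imaginary parts are strictly positive or all strictly negative. -/
theorem stmt4 (ω ω' ω'' : ℂ)
    (h : ‖ω‖ = 1) (h' : ‖ω'‖ = 1) (h'' : ‖ω''‖ = 1)
    (hprod : ω * ω' * ω'' = -1) :
    Real.pi ≤ |ω.arg| + |ω'.arg| + |ω''.arg| ∧
    (|ω.arg| + |ω'.arg| + |ω''.arg| = Real.pi ↔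
      (ω = 1 ∨ ω' = 1 ∨ ω'' = 1) ∨
      (0 < ω.im ∧ 0 < ω'.im ∧ 0 < ω''.im) ∨
      (ω.im < 0 ∧ ω'.im < 0 ∧ ω''.im < 0)) := by
  have key := pi_le_abs_add_abs_add_abs_and_eq_iff ω.arg_mem_Ioc ω'.arg_mem_Ioc ω''.arg_mem_Ioc
    (Complex.coe_arg_add_arg_add_arg_of_mul_mul_eq_neg_one hprod)
  refine ⟨key.1, ?_⟩
  rw [key.2, Complex.arg_eq_zero_iff_of_norm_eq_one h, Complex.arg_eq_zero_iff_of_norm_eq_one h',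
    Complex.arg_eq_zero_iff_of_norm_eq_one h'', ← Complex.im_pos_iff_arg_pos_and_arg_lt_pi,
    ← Complex.im_pos_iff_arg_pos_and_arg_lt_pi, ← Complex.im_pos_iff_arg_pos_and_arg_lt_pi,
    Complex.arg_neg_iff, Complex.arg_neg_iff, Complex.arg_neg_iff]
end

section
/- For every integer m ≤ 0 and every ω on the unit circle with ω ≠ 1, the Lerch zeta function satisfies ζ_ω(m) = Li_m(ω), where ζ_ω(s) = ∑_{n≥1} ω^n/n^s (analytically continued in s) and Li_m is the negative-order polylogarithm. -/
/-- The negative-order polylogarithms: `negPolylog m z = Li_{-m}(z)`, defined recursively by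
`Li₀(z) = z/(1−z)` and `Li_{m−1}(z) = z · (d/dz) Li_m(z)`. -/
noncomputable def negPolylog : ℕ → ℂ → ℂ
  | 0 => fun z => z / (1 - z)
  | (m + 1) => fun z => z * deriv (negPolylog m) z

/-!
Put `u = ω / (1 - ω)` and `g_s(n) = (n + 1)^{-s}`. Summation by parts, iterated `k` times, gives
for `Re s > 1`
  `F(s) = u^k ∑ₙ ωⁿ⁺¹ Δᵏg_s(n) + ∑_{j<k} u^{j+1} Δʲg_s(0)`.
By the mean value inequality `Δᵏg_s(n) = O(n^{-Re s - k})`, so the right-hand side is holomorphic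
on `Re s > 1 - k` and, by the identity theorem, equals `F` there. At `s = -m` with `k > m` the
sequence `g_s(n) = (n + 1)^m` is a polynomial of degree `m < k`, so only the finite sum survives.
Its coefficients `Δʲ(x ↦ x^m)(1) = j! S(m+1, j+1)` satisfy the recursion that matches
`Li_{-m-1} = z d/dz Li_{-m}`, so the finite sum is `Li_{-m}(ω)`.
-/

open Finset Function fwdDiff

theorem fwdDiff_iter_comp_natCast_add_one {R G : Type*} [AddCommMonoidWithOne R] [AddCommGroup G]
    (f : R → G) (k n : ℕ) :
    Δ_[1] ^[k] (fun n : ℕ => f (n + 1)) n = Δ_[1] ^[k] f (n + 1) := by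
  simp [fwdDiff_iter_eq_sum_shift, add_right_comm]

theorem fwdDiff_iter_succ_id_mul {R : Type*} [CommRing R] (p : R → R) (j : ℕ) (x : R) :
    Δ_[1] ^[j + 1] (fun y => y * p y) x
      = x * Δ_[1] ^[j + 1] p x + (j + 1) * Δ_[1] ^[j] p (x + 1) := by
  induction j generalizing x with
  | zero => simp only [fwdDiff, zero_add, iterate_one, iterate_zero, id_eq, Nat.cast_zero]; ring
  | succ j ih =>
    simp only [iterate_succ_apply' (n := j + 1), fwdDiff, ih, iterate_succ_apply' (n := j)]
    push_cast
    ring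

def negPolylogCoeff (m j : ℕ) : ℂ := Δ_[1] ^[j] (fun r : ℂ => r ^ m) 1

@[simp]
theorem negPolylogCoeff_zero_right (m : ℕ) : negPolylogCoeff m 0 = 1 := by
  simp [negPolylogCoeff]

theorem negPolylogCoeff_eq_zero {m j : ℕ} (h : m < j) : negPolylogCoeff m j = 0 := by
  rw [negPolylogCoeff, fwdDiff_iter_pow_eq_zero_of_lt h, Pi.zero_apply]

theorem negPolylogCoeff_succ_succ (m j : ℕ) :
    negPolylogCoeff (m + 1) (j + 1)
      = (j + 2) * negPolylogCoeff m (j + 1) + (j + 1) * negPolylogCoeff m j := by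
  have hstep : Δ_[1] ^[j] (fun r : ℂ => r ^ m) (1 + 1)
      = negPolylogCoeff m (j + 1) + negPolylogCoeff m j := by
    rw [negPolylogCoeff, negPolylogCoeff, iterate_succ_apply', fwdDiff, sub_add_cancel]
  simp only [negPolylogCoeff, pow_succ', fwdDiff_iter_succ_id_mul, hstep]
  ring

theorem sum_pow_mul_negPolylogCoeff_succ {m N : ℕ} (hmN : m + 1 < N) (u : ℂ) :
    ∑ j ∈ range N, u ^ (j + 1) * negPolylogCoeff (m + 1) j
      = ∑ j ∈ range N, (j + 1) * (u ^ (j + 1) + u ^ (j + 2)) * negPolylogCoeff m j := by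
  obtain ⟨M, rfl⟩ : ∃ M, N = M + 1 := ⟨N - 1, by omega⟩
  set a := negPolylogCoeff m
  have h1 : ∑ j ∈ range (M + 1), (j + 1) * u ^ (j + 1) * a j
      = ∑ j ∈ range M, (j + 2) * u ^ (j + 2) * a (j + 1) + u := by
    rw [sum_range_succ']
    push_cast
    simp [a, add_assoc, one_add_one_eq_two]
  have h2 : ∑ j ∈ range (M + 1), (j + 1) * u ^ (j + 2) * a j
      = ∑ j ∈ range M, (j + 1) * u ^ (j + 2) * a j := by
    have haM : a M = 0 := negPolylogCoeff_eq_zero (by omega)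
    rw [sum_range_succ, haM, mul_zero, add_zero]
  calc ∑ j ∈ range (M + 1), u ^ (j + 1) * negPolylogCoeff (m + 1) j
      = ∑ j ∈ range M, ((j + 2) * u ^ (j + 2) * a (j + 1) + (j + 1) * u ^ (j + 2) * a j) + u := by
        rw [sum_range_succ']
        simp only [negPolylogCoeff_succ_succ, negPolylogCoeff_zero_right, a]
        congr 1
        · exact sum_congr rfl fun j _ => by ring
        · ring
    _ = ∑ j ∈ range (M + 1), (j + 1) * (u ^ (j + 1) + u ^ (j + 2)) * a j := by
        have hsplit : ∑ j ∈ range (M + 1), (j + 1) * (u ^ (j + 1) + u ^ (j + 2)) * a j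
            = ∑ j ∈ range (M + 1), (j + 1) * u ^ (j + 1) * a j
              + ∑ j ∈ range (M + 1), (j + 1) * u ^ (j + 2) * a j := by
          rw [← sum_add_distrib]
          exact sum_congr rfl fun j _ => by ring
        rw [hsplit, h1, h2, sum_add_distrib]
        ring

theorem hasDerivAt_div_one_sub_pow_succ (j : ℕ) {z : ℂ} (hz : z ≠ 1) :
    HasDerivAt (fun w => (w / (1 - w)) ^ (j + 1))
      ((j + 1) * (z / (1 - z)) ^ j / (1 - z) ^ 2) z := by
  have h1z : 1 - z ≠ 0 := sub_ne_zero.mpr hz.symm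
  have hu : HasDerivAt (fun w : ℂ => w / (1 - w)) ((1 * (1 - z) - z * (0 - 1)) / (1 - z) ^ 2) z :=
    (hasDerivAt_id' z).fun_div ((hasDerivAt_const z 1).fun_sub (hasDerivAt_id' z)) h1z
  refine (hu.pow (j + 1)).congr_deriv ?_
  rw [Nat.add_sub_cancel]
  push_cast
  ring

theorem negPolylog_eq_sum {m N : ℕ} (hmN : m < N) {z : ℂ} (hz : z ≠ 1) :
    negPolylog m z = ∑ j ∈ range N, (z / (1 - z)) ^ (j + 1) * negPolylogCoeff m j := by
  induction m generalizing z with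
  | zero =>
    obtain ⟨M, rfl⟩ : ∃ M, N = M + 1 := ⟨N - 1, by omega⟩
    rw [sum_range_succ',
      sum_eq_zero fun j _ => by rw [negPolylogCoeff_eq_zero j.succ_pos, mul_zero]]
    simp [negPolylog]
  | succ m ih =>
    have h1z : 1 - z ≠ 0 := sub_ne_zero.mpr hz.symm
    have hlocal : negPolylog m =ᶠ[nhds z]
        fun w => ∑ j ∈ range N, (w / (1 - w)) ^ (j + 1) * negPolylogCoeff m j :=
      Filter.eventually_of_mem (isOpen_ne.mem_nhds hz) fun w hw => ih (by omega) hw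
    have hderiv := HasDerivAt.fun_sum (u := range N) fun j _ =>
      (hasDerivAt_div_one_sub_pow_succ j hz).mul_const (negPolylogCoeff m j)
    show z * _ = _
    rw [hlocal.deriv_eq, hderiv.deriv, sum_pow_mul_negPolylogCoeff_succ hmN, mul_sum]
    refine sum_congr rfl fun j _ => ?_
    simp only [div_pow]
    field_simp
    ring

section SummationByParts

variable {K : Type*} [Field K] [TopologicalSpace K] [IsTopologicalRing K] {ω S : K} {f : ℕ → K}

theorem HasSum.pow_succ_mul_fwdDiff (hω : ω ≠ 0) (h : HasSum (fun n => ω ^ (n + 1) * f n) S) :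
    HasSum (fun n => ω ^ (n + 1) * Δ_[1] f n) ((1 - ω) / ω * S - f 0) := by
  have hshift : HasSum (fun n => ω ^ (n + 1) * f (n + 1)) (ω⁻¹ * (S - ω * f 0)) := by
    have h1 := (hasSum_nat_add_iff' 1).mpr h
    rw [sum_range_one, Nat.zero_add, pow_one] at h1
    refine (h1.mul_left ω⁻¹).congr_fun fun n => ?_
    rw [pow_succ' ω (n + 1), mul_assoc, inv_mul_cancel_left₀ hω]
  have hval : (1 - ω) / ω * S - f 0 = ω⁻¹ * (S - ω * f 0) - S := by
    field_simp
    ring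
  rw [hval]
  exact (hshift.sub h).congr_fun fun n => by simp only [fwdDiff, mul_sub]

theorem HasSum.exists_pow_succ_mul_fwdDiff_iter (hω0 : ω ≠ 0) (hω1 : ω ≠ 1)
    (h : HasSum (fun n => ω ^ (n + 1) * f n) S) (k : ℕ) :
    ∃ T, HasSum (fun n => ω ^ (n + 1) * Δ_[1] ^[k] f n) T ∧
      S = (ω / (1 - ω)) ^ k * T + ∑ j ∈ range k, (ω / (1 - ω)) ^ (j + 1) * Δ_[1] ^[j] f 0 := by
  induction k with
  | zero => exact ⟨S, h, by simp⟩
  | succ k ih =>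
    obtain ⟨T, hT, hST⟩ := ih
    refine ⟨_, iterate_succ_apply' (fwdDiff 1) k f ▸ hT.pow_succ_mul_fwdDiff hω0, ?_⟩
    have hu : ω / (1 - ω) * ((1 - ω) / ω) = 1 := by
      have h1ω : 1 - ω ≠ 0 := sub_ne_zero.mpr hω1.symm
      field_simp
    rw [hST, sum_range_succ]
    linear_combination -((ω / (1 - ω)) ^ k * T) * hu

end SummationByParts

theorem HasDerivAt.fwdDiff_iter {𝕜 F : Type*} [NontriviallyNormedField 𝕜] [NormedAddCommGroup F]
    [NormedSpace 𝕜 F] {f f' : 𝕜 → F} {S : Set 𝕜} {h : 𝕜} (hS : ∀ y ∈ S, y + h ∈ S)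
    (hf : ∀ y ∈ S, HasDerivAt f (f' y) y) (k : ℕ) :
    ∀ y ∈ S, HasDerivAt (Δ_[h] ^[k] f) (Δ_[h] ^[k] f' y) y := by
  induction k with
  | zero => exact hf
  | succ k ih =>
    intro y hy
    rw [iterate_succ', comp_apply, comp_apply]
    exact ((ih (y + h) (hS y hy)).comp_add_const y h).sub (ih y hy)

theorem norm_fwdDiff_iter_ofReal_cpow_le (k : ℕ) (s : ℂ) (hs : 0 ≤ s.re + k) {x : ℝ}
    (hx : 0 < x) :
    ‖Δ_[1] ^[k] (fun y : ℝ => (y : ℂ) ^ (-s)) x‖ ≤ (∏ i ∈ range k, ‖s + i‖) * x ^ (-s.re - k) := by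
  induction k generalizing s x with
  | zero => simp [Complex.norm_cpow_eq_rpow_re_of_pos hx]
  | succ k ih =>
    have hderiv : ∀ y ∈ Set.Ioi (0 : ℝ), HasDerivAt (fun y : ℝ => (y : ℂ) ^ (-s))
        (((-s) • fun y : ℝ => (y : ℂ) ^ (-(s + 1))) y) y := by
      intro y hy
      convert (Complex.hasStrictDerivAt_cpow_const (c := -s)
        (Complex.ofReal_mem_slitPlane.2 hy)).hasDerivAt.comp_ofReal using 1
      simp only [Pi.smul_apply, smul_eq_mul]
      ring_nf
    have hdiff := HasDerivAt.fwdDiff_iter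
      (fun (y : ℝ) (hy : 0 < y) => show 0 < y + 1 by positivity) hderiv k
    rw [fwdDiff_iter_const_smul] at hdiff
    have hs' : 0 ≤ (s + 1).re + k := by push_cast at hs; simp; linarith
    set C := ‖s‖ * ((∏ i ∈ range k, ‖s + 1 + i‖) * x ^ (-(s + 1).re - k))
    have hbound : ∀ y ∈ Set.Ico x (x + 1),
        ‖((-s) • Δ_[1] ^[k] fun y : ℝ => (y : ℂ) ^ (-(s + 1))) y‖ ≤ C := by
      intro y hy
      rw [Pi.smul_apply, norm_smul, norm_neg]
      refine mul_le_mul_of_nonneg_left ((ih (s + 1) hs' (hx.trans_le hy.1)).trans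
        (mul_le_mul_of_nonneg_left (Real.rpow_le_rpow_of_nonpos hx hy.1 (by linarith))
          (by positivity))) (norm_nonneg s)
    have hmvt := norm_image_sub_le_of_norm_deriv_le_segment'
      (fun y hy => (hdiff y (hx.trans_le hy.1)).hasDerivWithinAt) hbound
      (x + 1) ⟨by linarith, le_rfl⟩
    rw [iterate_succ_apply', fwdDiff]
    refine hmvt.trans_eq ?_
    have hprod : ∏ i ∈ range k, ‖s + ((i + 1 : ℕ) : ℂ)‖ = ∏ i ∈ range k, ‖s + 1 + i‖ :=
      prod_congr rfl fun i _ => by push_cast; ring_nf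
    rw [add_sub_cancel_left, mul_one, prod_range_succ', hprod]
    simp only [C, Complex.add_re, Complex.one_re]
    push_cast
    ring_nf

noncomputable def zetaSeq (s : ℂ) (n : ℕ) : ℂ := ((n : ℂ) + 1) ^ (-s)

theorem fwdDiff_iter_zetaSeq (k n : ℕ) (s : ℂ) :
    Δ_[1] ^[k] (zetaSeq s) n = Δ_[1] ^[k] (fun y : ℝ => (y : ℂ) ^ (-s)) (n + 1) := by
  have hseq : zetaSeq s = fun n : ℕ => (((n + 1 : ℝ)) : ℂ) ^ (-s) := by
    funext n
    simp [zetaSeq]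
  rw [hseq, fwdDiff_iter_comp_natCast_add_one (fun y : ℝ => (y : ℂ) ^ (-s))]

theorem norm_fwdDiff_iter_zetaSeq_le (k n : ℕ) (s : ℂ) (hs : 0 ≤ s.re + k) :
    ‖Δ_[1] ^[k] (zetaSeq s) n‖ ≤ (∏ i ∈ range k, ‖s + i‖) * ((n : ℝ) + 1) ^ (-s.re - k) := by
  rw [fwdDiff_iter_zetaSeq]
  exact norm_fwdDiff_iter_ofReal_cpow_le k s hs (by positivity)

theorem differentiable_fwdDiff_iter_zetaSeq (k n : ℕ) :
    Differentiable ℂ fun s => Δ_[1] ^[k] (zetaSeq s) n := by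
  simp only [fwdDiff_iter_eq_sum_shift, zetaSeq]
  refine Differentiable.fun_sum fun i _ => Differentiable.const_smul ?_ _
  exact Differentiable.const_cpow differentiable_neg (Or.inl (by norm_cast))

noncomputable def lerchTail (ω : ℂ) (k : ℕ) (s : ℂ) : ℂ :=
  ∑' n : ℕ, ω ^ (n + 1) * Δ_[1] ^[k] (zetaSeq s) n

theorem differentiableOn_lerchTail {ω : ℂ} (hω : ‖ω‖ ≤ 1) (k : ℕ) :
    DifferentiableOn ℂ (lerchTail ω k) {s | 1 - k < s.re} := by
  refine differentiableOn_of_locally_differentiableOn fun s₀ hs₀ => ?_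
  obtain ⟨σ, hσ, hσs₀⟩ : ∃ σ : ℝ, 1 - k < σ ∧ σ < s₀.re := exists_between hs₀
  set R : ℝ := ‖s₀‖ + 1
  have hopen : IsOpen ({s : ℂ | σ < s.re} ∩ Metric.ball 0 R) :=
    (isOpen_lt continuous_const Complex.continuous_re).inter Metric.isOpen_ball
  refine ⟨_, hopen, ⟨hσs₀, by simp [R]⟩, DifferentiableOn.mono ?_ Set.inter_subset_right⟩
  have hsum : Summable fun n : ℕ => (R + k) ^ k * ((n : ℝ) + 1) ^ (-σ - k) := by
    refine Summable.mul_left _ ?_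
    have := (summable_nat_add_iff 1).mpr (Real.summable_nat_rpow.mpr (by linarith : -σ - k < -1))
    exact_mod_cast this
  refine Complex.differentiableOn_tsum_of_summable_norm hsum
    (fun n => ((differentiable_fwdDiff_iter_zetaSeq k n).const_mul _).differentiableOn) hopen ?_
  rintro n s ⟨hσs, hsR⟩
  simp only [Set.mem_ofPred_eq, mem_ball_zero_iff] at hσs hsR
  have hprod : ∏ i ∈ range k, ‖s + i‖ ≤ (R + k) ^ k := by
    refine (prod_le_prod (fun _ _ => norm_nonneg _) fun i hi => ?_).trans_eq
      (by rw [prod_const, card_range])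
    have : (i : ℝ) ≤ k := by exact_mod_cast (mem_range.mp hi).le
    calc ‖s + i‖ ≤ ‖s‖ + i := by simpa using norm_add_le s i
      _ ≤ R + k := by linarith
  have hpow : ((n : ℝ) + 1) ^ (-s.re - k) ≤ ((n : ℝ) + 1) ^ (-σ - k) :=
    Real.rpow_le_rpow_of_exponent_le (by linarith [n.cast_nonneg (α := ℝ)]) (by linarith)
  rw [norm_mul, norm_pow]
  calc ‖ω‖ ^ (n + 1) * ‖Δ_[1] ^[k] (zetaSeq s) n‖
      ≤ 1 * ((∏ i ∈ range k, ‖s + i‖) * ((n : ℝ) + 1) ^ (-s.re - k)) :=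
        mul_le_mul (pow_le_one₀ (norm_nonneg ω) hω)
          (norm_fwdDiff_iter_zetaSeq_le k n s (by linarith)) (norm_nonneg _) zero_le_one
    _ ≤ (R + k) ^ k * ((n : ℝ) + 1) ^ (-σ - k) := by
        rw [one_mul]
        exact mul_le_mul hprod hpow (by positivity) (by positivity)

noncomputable def lerchContinuation (ω : ℂ) (k : ℕ) (s : ℂ) : ℂ :=
  (ω / (1 - ω)) ^ k * lerchTail ω k s
    + ∑ j ∈ range k, (ω / (1 - ω)) ^ (j + 1) * Δ_[1] ^[j] (zetaSeq s) 0

theorem HasSum.eq_lerchContinuation {ω s S : ℂ} (hω0 : ω ≠ 0) (hω1 : ω ≠ 1)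
    (h : HasSum (fun n => ω ^ (n + 1) * zetaSeq s n) S) (k : ℕ) :
    S = lerchContinuation ω k s := by
  obtain ⟨T, hT, hST⟩ := h.exists_pow_succ_mul_fwdDiff_iter hω0 hω1 k
  rw [hST, lerchContinuation, lerchTail, hT.tsum_eq]

theorem differentiableOn_lerchContinuation {ω : ℂ} (hω : ‖ω‖ ≤ 1) (k : ℕ) :
    DifferentiableOn ℂ (lerchContinuation ω k) {s | 1 - k < s.re} :=
  ((differentiableOn_lerchTail hω k).const_mul _).add <| DifferentiableOn.fun_sum fun j _ =>
    ((differentiable_fwdDiff_iter_zetaSeq j 0).const_mul _).differentiableOn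

theorem lerchContinuation_neg_natCast {ω : ℂ} (hω1 : ω ≠ 1) {m k : ℕ} (hmk : m < k) :
    lerchContinuation ω k (-m) = negPolylog m ω := by
  have hseq : zetaSeq (-m) = fun n : ℕ => ((n : ℂ) + 1) ^ m := by
    funext n
    simp [zetaSeq]
  have hcoeff (j : ℕ) :
      Δ_[1] ^[j] (zetaSeq (-m)) = fun n : ℕ => Δ_[1] ^[j] (fun r : ℂ => r ^ m) ((n : ℂ) + 1) := by
    funext n
    rw [hseq, fwdDiff_iter_comp_natCast_add_one (fun r : ℂ => r ^ m)]
  have htail : lerchTail ω k (-m) = 0 := by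
    simp [lerchTail, hcoeff, fwdDiff_iter_pow_eq_zero_of_lt hmk]
  simp [lerchContinuation, htail, hcoeff, negPolylog_eq_sum hmk hω1, negPolylogCoeff]

theorem eqOn_re_gt_of_eqOn_re_gt {f g : ℂ → ℂ} {a b : ℝ} (hf : DifferentiableOn ℂ f {s | a < s.re})
    (hg : DifferentiableOn ℂ g {s | a < s.re}) (hfg : Set.EqOn f g {s | b < s.re}) :
    Set.EqOn f g {s | a < s.re} := by
  have hopen (c : ℝ) : IsOpen {s : ℂ | c < s.re} := isOpen_lt continuous_const Complex.continuous_re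
  set z₀ : ℂ := ((max a b + 1 : ℝ) : ℂ)
  have hz₀ (c : ℝ) (hc : c ≤ max a b) : z₀ ∈ {s : ℂ | c < s.re} := by
    simp only [Set.mem_ofPred_eq, z₀, Complex.ofReal_re]
    linarith
  exact (hf.analyticOnNhd (hopen a)).eqOn_of_preconnected_of_eventuallyEq
    (hg.analyticOnNhd (hopen a)) (convex_halfSpace_re_gt a).isPreconnected (hz₀ a (le_max_left a b))
    (Filter.eventually_of_mem ((hopen b).mem_nhds (hz₀ b (le_max_right a b))) hfg)

/-- For `|ω| = 1`, `ω ≠ 1`, the analytic continuation of the Lerch zeta function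
`ζ_ω(s) = ∑_{n ≥ 1} ωⁿ n^{−s}` (encoded as any entire function `F` agreeing with the series
for `Re s > 1`) satisfies `ζ_ω(−m) = Li_{−m}(ω)` for every integer `m ≥ 0`. -/
theorem stmt11 (ω : ℂ) (hω : ‖ω‖ = 1) (hω1 : ω ≠ 1)
    (F : ℂ → ℂ) (hF : Differentiable ℂ F)
    (hFs : ∀ s : ℂ, 1 < s.re →
      HasSum (fun n : ℕ => ω ^ (n + 1) / ((n : ℂ) + 1) ^ s) (F s))
    (m : ℕ) :
    F (-(m : ℂ)) = negPolylog m ω := by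
  have hω0 : ω ≠ 0 := norm_ne_zero_iff.mp (hω ▸ one_ne_zero)
  have hseries : Set.EqOn F (lerchContinuation ω (m + 2)) {s | 1 < s.re} := fun s hs =>
    HasSum.eq_lerchContinuation hω0 hω1
      (by simpa [zetaSeq, Complex.cpow_neg, div_eq_mul_inv] using hFs s hs) (m + 2)
  have hcont := eqOn_re_gt_of_eqOn_re_gt hF.differentiableOn
    (differentiableOn_lerchContinuation hω.le (m + 2)) hseries
  rw [hcont (by simp; linarith), lerchContinuation_neg_natCast hω1 (by omega)]
end

section
/- For Re s > 1, Re a > 0, and ω on the unit circle with ω ≠ 1, the Mellin transform formula ∫₀^∞ Li₂(ω e^{−ax}; e^{−x}) x^{s−1} dx = Γ(s)·ζ_ω(s+1)·ζ(s,a) holds, where Li₂(z;q) = ∑_{n≥1} z^n/(n(1−q^n)) is the q-dilogarithm, ζ_ω(s) = ∑_{n≥1} ω^n/n^s is the Lerch zeta function, and ζ(s,a) = ∑_{n≥0} (a+n)^{−s} is the Hurwitz zeta function. -/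
/-!
Since `|ω e^{-ax}| < 1` and `|e^{-x}| < 1`, expanding `1/(1 - e^{-nx})` as a geometric series writes
`Li₂(ω e^{-ax}; e^{-x})` as the absolutely convergent double series
`∑_{n ≥ 1, m ≥ 0} (ωⁿ/n) e^{-n(a+m)x}`. Each term has Mellin transform
`Γ(s) (ωⁿ/n) (n(a+m))^{-s} = Γ(s) (ωⁿ/n^{s+1}) (a+m)^{-s}`, and the sum of the absolute values of
these transforms is dominated by `Γ(Re s) ζ(Re s + 1) ζ(Re s, Re a) < ∞`, so summation and
integration may be interchanged. The double sum then factors into the Lerch and Hurwitz series.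
-/

open MeasureTheory Set Filter Complex Topology

/-- The q-dilogarithm `Li₂(z;q) = ∑_{n ≥ 1} zⁿ/(n(1−qⁿ))`. -/
noncomputable def qdilog (z q : ℂ) : ℂ :=
  ∑' n : ℕ, z ^ (n + 1) / (((n : ℂ) + 1) * (1 - q ^ (n + 1)))

lemma natCast_add_one_mul_re (n : ℕ) (w : ℂ) : (((n : ℂ) + 1) * w).re = (n + 1) * w.re := by
  simp

lemma ofReal_mul_cpow {r : ℝ} (hr : 0 < r) {w : ℂ} (hw : w ≠ 0) (s : ℂ) :
    ((r : ℂ) * w) ^ s = (r : ℂ) ^ s * w ^ s := by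
  have hr' : (r : ℂ) ≠ 0 := ofReal_ne_zero.2 hr.ne'
  rw [cpow_def_of_ne_zero (mul_ne_zero hr' hw), cpow_def_of_ne_zero hr', cpow_def_of_ne_zero hw,
    log_ofReal_mul hr hw, add_mul, Complex.exp_add, ofReal_log hr.le]

lemma tsum_mul_tsum_of_summable_prod {ι κ K : Type*} [NormedDivisionRing K] [CompleteSpace K]
    {f : ι → K} {g : κ → K} (h : Summable fun x : ι × κ => f x.1 * g x.2) :
    (∑' i, f i) * ∑' j, g j = ∑' x : ι × κ, f x.1 * g x.2 := by
  rw [h.tsum_prod]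
  simp_rw [tsum_mul_left, tsum_mul_right]

lemma norm_cexp_neg_mul_lt_one {c : ℂ} (hc : 0 < c.re) {t : ℝ} (ht : 0 < t) :
    ‖cexp (-(c * t))‖ < 1 := by
  rw [norm_exp, Real.exp_lt_one_iff, neg_re, re_mul_ofReal, neg_neg_iff_pos]
  positivity

section GammaIntegral

variable {s : ℂ}

lemma norm_cpow_mul_cexp_neg_mul (b : ℂ) {t : ℝ} (ht : 0 < t) :
    ‖(t : ℂ) ^ (s - 1) * cexp (-(b * t))‖ = t ^ (s.re - 1) * Real.exp (-(b.re * t)) := by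
  simp [norm_cpow_eq_rpow_re_of_pos ht, Complex.norm_exp]

lemma continuousOn_cpow_mul_cexp_neg_mul (b : ℂ) :
    ContinuousOn (fun t : ℝ => (t : ℂ) ^ (s - 1) * cexp (-(b * t))) (Ioi 0) := by
  refine ContinuousOn.mul (fun t ht => ?_) (by fun_prop)
  exact ((continuousAt_cpow_const (ofReal_mem_slitPlane.2 ht)).comp
    continuous_ofReal.continuousAt).continuousWithinAt

lemma integrableOn_cpow_mul_cexp_neg_mul (hs : 0 < s.re) {b : ℂ} (hb : 0 < b.re) :
    IntegrableOn (fun t : ℝ => (t : ℂ) ^ (s - 1) * cexp (-(b * t))) (Ioi 0) := by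
  have hreal := integrableOn_rpow_mul_exp_neg_mul_rpow (by linarith : -1 < s.re - 1)
    zero_lt_one hb
  refine hreal.mono' ((continuousOn_cpow_mul_cexp_neg_mul b).aestronglyMeasurable
    measurableSet_Ioi) ((ae_restrict_iff' measurableSet_Ioi).2 (.of_forall fun t ht => ?_))
  rw [norm_cpow_mul_cexp_neg_mul b ht, Real.rpow_one, neg_mul]

lemma differentiableOn_integral_cpow_mul_cexp_neg_mul (hs : 0 < s.re) :
    DifferentiableOn ℂ (fun b : ℂ => ∫ t in Ioi (0 : ℝ), (t : ℂ) ^ (s - 1) * cexp (-(b * t)))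
      {b | 0 < b.re} := by
  intro c (hc : 0 < c.re)
  refine DifferentiableAt.differentiableWithinAt (hasDerivAt_integral_of_dominated_loc_of_deriv_le
    (F' := fun b (t : ℝ) => -(t : ℂ) * ((t : ℂ) ^ (s - 1) * cexp (-(b * t))))
    (bound := fun t => t ^ s.re * Real.exp (-(c.re / 2) * t ^ (1 : ℝ)))
    (Metric.ball_mem_nhds c (half_pos hc))
    (.of_forall fun b => (continuousOn_cpow_mul_cexp_neg_mul b).aestronglyMeasurable
      measurableSet_Ioi)
    (integrableOn_cpow_mul_cexp_neg_mul hs hc)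
    ((continuous_ofReal.neg.continuousOn.mul
      (continuousOn_cpow_mul_cexp_neg_mul c)).aestronglyMeasurable measurableSet_Ioi)
    ((ae_restrict_iff' measurableSet_Ioi).2 (.of_forall fun t ht b hb => ?_))
    (integrableOn_rpow_mul_exp_neg_mul_rpow (by linarith) zero_lt_one (half_pos hc))
    (.of_forall fun t b _ => ?_)).2.differentiableAt
  · have hbc : c.re / 2 ≤ b.re := by
      have := (abs_le.1 ((abs_re_le_norm (b - c)).trans (mem_ball_iff_norm.1 hb).le)).1
      rw [sub_re] at this
      linarith
    rw [norm_mul, norm_neg, norm_real, Real.norm_of_nonneg (le_of_lt ht),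
      norm_cpow_mul_cexp_neg_mul b ht, ← mul_assoc, Real.rpow_one,
      ← Real.rpow_one_add' (le_of_lt ht) (by linarith), add_sub_cancel]
    exact mul_le_mul_of_nonneg_left (Real.exp_le_exp.2 (by nlinarith [mem_Ioi.1 ht]))
      (Real.rpow_nonneg (le_of_lt ht) _)
  · have hlin : HasDerivAt (fun y : ℂ => -(y * t)) (-(t : ℂ)) b :=
      (hasDerivAt_mul_const (t : ℂ)).fun_neg
    convert hlin.cexp.const_mul ((t : ℂ) ^ (s - 1)) using 1
    · rfl
    · ring

lemma integral_cpow_mul_cexp_neg_mul_Ioi (hs : 0 < s.re) {b : ℂ} (hb : 0 < b.re) :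
    ∫ t in Ioi (0 : ℝ), (t : ℂ) ^ (s - 1) * cexp (-(b * t)) = Gamma s / b ^ s := by
  have hU : IsOpen {b : ℂ | 0 < b.re} := isOpen_lt continuous_const continuous_re
  have hrhs : DifferentiableOn ℂ (fun b : ℂ => Gamma s / b ^ s) {b | 0 < b.re} := fun b hb =>
    ((differentiableAt_const _).div (differentiableAt_id.cpow_const (.inl hb))
      (cpow_ne_zero_iff.2 (.inl (ne_zero_of_re_pos hb)))).differentiableWithinAt
  have hreal : ∀ r : ℝ, 0 < r →
      ∫ t in Ioi (0 : ℝ), (t : ℂ) ^ (s - 1) * cexp (-(r * t)) = Gamma s / (r : ℂ) ^ s := by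
    intro r hr
    rw [Complex.integral_cpow_mul_exp_neg_mul_Ioi hs hr, one_div,
      inv_cpow _ _ (by rw [arg_ofReal_of_nonneg hr.le]; exact Real.pi_ne_zero.symm), inv_mul_eq_div]
  have hofReal : Tendsto ofReal (𝓝[≠] 1) (𝓝[≠] (1 : ℂ)) := by
    simpa using continuous_ofReal.continuousWithinAt.tendsto_nhdsWithin
      (x := (1 : ℝ)) fun _ _ ↦ by simp_all
  -- Both sides are holomorphic on the right half-plane and agree for real `b > 0`.
  refine ((differentiableOn_integral_cpow_mul_cexp_neg_mul hs).analyticOnNhd hU)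
    |>.eqOn_of_preconnected_of_frequently_eq (hrhs.analyticOnNhd hU)
    (convex_halfSpace_re_gt 0).isPreconnected (show (1 : ℂ) ∈ {b : ℂ | 0 < b.re} by simp) ?_ hb
  refine hofReal.frequently (Eventually.frequently ?_)
  filter_upwards [nhdsWithin_le_nhds (lt_mem_nhds one_pos)] with r hr using hreal r hr

end GammaIntegral

lemma hasSum_mellin_of_re_pos {ι : Type*} [Countable ι] {a p : ι → ℂ} {F : ℝ → ℂ} {s : ℂ}
    (hp : ∀ i, 0 < (p i).re) (hs : 0 < s.re)
    (hF : ∀ t : ℝ, 0 < t → HasSum (fun i => a i * cexp (-(p i * t))) (F t))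
    (h_sum : Summable fun i => ‖a i‖ / (p i).re ^ s.re) :
    HasSum (fun i => Gamma s * a i / p i ^ s) (mellin F s) := by
  simp_rw [mellin, smul_eq_mul, ← setIntegral_congr_fun measurableSet_Ioi
    (fun t ht => congr_arg _ (hF t ht).tsum_eq), ← tsum_mul_left, mul_left_comm _ (a _)]
  convert! hasSum_integral_of_summable_integral_norm
    (F := fun i (t : ℝ) => a i * ((t : ℂ) ^ (s - 1) * cexp (-(p i * t))))
    (fun i => (integrableOn_cpow_mul_cexp_neg_mul hs (hp i)).const_mul (a i)) ?_ using 2 with i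
  · rw [integral_const_mul, integral_cpow_mul_cexp_neg_mul_Ioi hs (hp i)]
    ring
  · refine (h_sum.mul_left (Real.Gamma s.re)).congr fun i => ?_
    rw [setIntegral_congr_fun measurableSet_Ioi fun t ht => by
        rw [norm_mul, norm_cpow_mul_cexp_neg_mul _ ht],
      integral_const_mul, Real.integral_rpow_mul_exp_neg_mul_Ioi hs (hp i), one_div,
      Real.inv_rpow (hp i).le]
    ring

lemma hasSum_qdilog {z q : ℂ} (hz : ‖z‖ < 1) (hq : ‖q‖ < 1) :
    HasSum (fun nm : ℕ × ℕ => z ^ (nm.1 + 1) / (nm.1 + 1) * (q ^ (nm.1 + 1)) ^ nm.2)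
      (qdilog z q) := by
  have hsum : Summable fun nm : ℕ × ℕ => z ^ (nm.1 + 1) / (nm.1 + 1) * (q ^ (nm.1 + 1)) ^ nm.2 := by
    refine .of_norm_bounded ((summable_geometric_of_lt_one (norm_nonneg z) hz).mul_of_nonneg
      (summable_geometric_of_lt_one (norm_nonneg q) hq) (fun _ => by positivity)
      (fun _ => by positivity)) fun ⟨n, m⟩ => ?_
    have hn : 1 ≤ ‖(n : ℂ) + 1‖ := by norm_cast; omega
    rw [norm_mul, norm_div, norm_pow, norm_pow, norm_pow, ← pow_mul, mul_comm (n + 1)]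
    gcongr ?_ * ?_
    · refine div_le_of_le_mul₀ (norm_nonneg _) (by positivity) ?_
      calc ‖z‖ ^ (n + 1) ≤ ‖z‖ ^ n := pow_le_pow_of_le_one (norm_nonneg z) hz.le n.le_succ
        _ ≤ ‖z‖ ^ n * ‖(n : ℂ) + 1‖ := le_mul_of_one_le_right (by positivity) hn
    · exact pow_le_pow_of_le_one (norm_nonneg q) hq.le (Nat.le_mul_of_pos_right m n.succ_pos)
  have hfiber (n : ℕ) : HasSum (fun m => z ^ (n + 1) / (n + 1) * (q ^ (n + 1)) ^ m)
      (z ^ (n + 1) / ((n + 1) * (1 - q ^ (n + 1)))) := by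
    have hqn : ‖q ^ (n + 1)‖ < 1 := by
      rw [norm_pow]; exact pow_lt_one₀ (norm_nonneg _) hq n.succ_ne_zero
    rw [← div_div, div_eq_mul_inv _ (1 - _)]
    exact (hasSum_geometric_of_norm_lt_one hqn).mul_left _
  unfold qdilog
  rw [(hsum.hasSum.prod_fiberwise hfiber).tsum_eq]
  exact hsum.hasSum

lemma hasSum_qdilog_mul_cexp {ω a : ℂ} (hω : ‖ω‖ ≤ 1) (ha : 0 < a.re) {t : ℝ} (ht : 0 < t) :
    HasSum (fun nm : ℕ × ℕ => ω ^ (nm.1 + 1) / (nm.1 + 1) *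
        cexp (-(((nm.1 : ℂ) + 1) * (a + nm.2) * t)))
      (qdilog (ω * cexp (-(a * t))) (cexp (-t))) := by
  refine (hasSum_qdilog ?_ ?_).congr_fun fun ⟨n, m⟩ => ?_
  · rw [norm_mul]
    exact mul_lt_one_of_nonneg_of_lt_one_right hω (norm_nonneg _) (norm_cexp_neg_mul_lt_one ha ht)
  · simpa using norm_cexp_neg_mul_lt_one (c := 1) (by simp) ht
  · simp only [mul_pow, ← Complex.exp_nat_mul]
    rw [mul_div_right_comm, mul_assoc (_ / _), ← Complex.exp_add]
    congr 2
    push_cast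
    ring

lemma summable_norm_div_re_rpow {ω a : ℂ} {σ : ℝ} (hω : ‖ω‖ ≤ 1) (ha : 0 < a.re) (hσ : 1 < σ) :
    Summable fun nm : ℕ × ℕ =>
      ‖ω ^ (nm.1 + 1) / (nm.1 + 1)‖ / (((nm.1 : ℂ) + 1) * (a + nm.2)).re ^ σ := by
  have hn : Summable fun n : ℕ => 1 / ((n : ℝ) + 1) ^ (σ + 1) := by
    refine ((Real.summable_one_div_nat_add_rpow 1 (σ + 1)).2 (by linarith)).congr fun n => ?_
    rw [abs_of_pos n.cast_add_one_pos]
  have hm : Summable fun m : ℕ => 1 / (a.re + m) ^ σ := by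
    refine ((Real.summable_one_div_nat_add_rpow a.re σ).2 hσ).congr fun m => ?_
    rw [abs_of_pos (by positivity), add_comm]
  simp only [natCast_add_one_mul_re, add_re, natCast_re]
  refine .of_nonneg_of_le (fun _ => by positivity) (fun ⟨n, m⟩ => ?_)
    (hn.mul_of_nonneg hm (fun _ => by positivity) (fun _ => by positivity))
  have hn0 := n.cast_add_one_pos (α := ℝ)
  calc ‖ω ^ (n + 1) / ((n : ℂ) + 1)‖ / (((n : ℝ) + 1) * (a.re + m)) ^ σ
      ≤ 1 / ((n : ℝ) + 1) / (((n : ℝ) + 1) * (a.re + m)) ^ σ := by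
        gcongr
        rw [norm_div, norm_pow, ← Nat.cast_add_one, norm_natCast, Nat.cast_add_one]
        gcongr
        exact pow_le_one₀ (norm_nonneg ω) hω
    _ = 1 / ((n : ℝ) + 1) ^ (σ + 1) * (1 / (a.re + m) ^ σ) := by
        rw [Real.mul_rpow hn0.le (by positivity), Real.rpow_add hn0, Real.rpow_one]
        field_simp

theorem stmt12_general (s a ω : ℂ) (hs : 1 < s.re) (ha : 0 < a.re)
    (hω : ‖ω‖ = 1) :
    ∫ x in Set.Ioi (0 : ℝ),
        qdilog (ω * Complex.exp (-(a * (x : ℂ)))) (Complex.exp (-(x : ℂ))) * (x : ℂ) ^ (s - 1)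
      = Complex.Gamma s * (∑' n : ℕ, ω ^ (n + 1) / ((n : ℂ) + 1) ^ (s + 1)) *
          (∑' n : ℕ, (a + (n : ℂ)) ^ (-s)) := by
  have hmellin := hasSum_mellin_of_re_pos
    (F := fun x : ℝ => qdilog (ω * cexp (-(a * x))) (cexp (-x)))
    (fun nm : ℕ × ℕ => (by rw [natCast_add_one_mul_re, add_re, natCast_re]; positivity :
      0 < (((nm.1 : ℂ) + 1) * (a + nm.2)).re))
    (by linarith) (fun t ht => hasSum_qdilog_mul_cexp hω.le ha ht)
    (summable_norm_div_re_rpow hω.le ha hs)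
  have hterm (n m : ℕ) : Gamma s * (ω ^ (n + 1) / ((n : ℂ) + 1)) / (((n : ℂ) + 1) * (a + m)) ^ s
      = Gamma s * (ω ^ (n + 1) / ((n : ℂ) + 1) ^ (s + 1)) * (a + m) ^ (-s) := by
    have hn : (((n : ℝ) + 1 : ℝ) : ℂ) = (n : ℂ) + 1 := by push_cast; ring
    have ham : a + m ≠ 0 := ne_zero_of_re_pos (by rw [add_re, natCast_re]; positivity)
    rw [← hn, ofReal_mul_cpow n.cast_add_one_pos ham,
      cpow_add _ _ (ofReal_ne_zero.2 n.cast_add_one_pos.ne'), cpow_one, cpow_neg]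
    field_simp
  simp only [hterm] at hmellin
  rw [← tsum_mul_left (f := fun n : ℕ => ω ^ (n + 1) / ((n : ℂ) + 1) ^ (s + 1)),
    tsum_mul_tsum_of_summable_prod
    (f := fun n : ℕ => Gamma s * (ω ^ (n + 1) / ((n : ℂ) + 1) ^ (s + 1)))
    (g := fun m : ℕ => (a + m) ^ (-s)) hmellin.summable, hmellin.tsum_eq, mellin]
  congr 1 with x
  rw [smul_eq_mul, mul_comm]

/-- Mellin transform formula: for `Re s > 1`, `Re a > 0`, `|ω| = 1`, `ω ≠ 1`,
`∫₀^∞ Li₂(ω e^{−ax}; e^{−x}) x^{s−1} dx = Γ(s)·ζ_ω(s+1)·ζ(s,a)`,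
with the Lerch zeta `ζ_ω(s+1) = ∑_{n ≥ 1} ωⁿ/n^{s+1}` and Hurwitz zeta
`ζ(s,a) = ∑_{n ≥ 0} (a+n)^{−s}`. -/
theorem stmt12 (s a ω : ℂ) (hs : 1 < s.re) (ha : 0 < a.re)
    (hω : ‖ω‖ = 1) (hω1 : ω ≠ 1) :
    ∫ x in Set.Ioi (0 : ℝ),
        qdilog (ω * Complex.exp (-(a * (x : ℂ)))) (Complex.exp (-(x : ℂ))) * (x : ℂ) ^ (s - 1)
      = Complex.Gamma s * (∑' n : ℕ, ω ^ (n + 1) / ((n : ℂ) + 1) ^ (s + 1)) *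
          (∑' n : ℕ, (a + (n : ℂ)) ^ (-s)) :=
  stmt12_general s a ω hs ha hω
end

section
/- Let T = [[1, −1], [0, 1]] and for W ∈ ℂ let H_W = [[e^{W/2}, 0], [0, e^{−W/2}]]. Suppose W + W' + W'' = 0 and that z := e^{W}·(−1)^{δ}, z'' := e^{W''}·(−1)^{δ''} satisfy z'' = (z−1)/z, where δ = δ'' = 1. Then H_{W''}·T·H_{W'}·T·H_W·T = I, the identity matrix. -/
/-! Each factor `H_V · T = [[e^{V/2}, -e^{V/2}], [0, e^{-V/2}]]` is upper triangular, so the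
hexagon product is upper triangular with diagonal `e^{±(W+W'+W'')/2} = 1` and corner entry
`-(1 + e^{-W} + e^{W''})`. With `z = -e^W` and `z'' = -e^{W''}`, the relation `z'' = 1 - 1/z`
says exactly that this corner entry vanishes. -/

/-- The matrix `T = [[1, −1], [0, 1]]`. -/
noncomputable def Tmat : Matrix (Fin 2) (Fin 2) ℂ := !![1, -1; 0, 1]

/-- The matrix `H_W = [[e^{W/2}, 0], [0, e^{−W/2}]]`. -/
noncomputable def Hmat (W : ℂ) : Matrix (Fin 2) (Fin 2) ℂ :=
  !![Complex.exp (W / 2), 0; 0, Complex.exp (-(W / 2))]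

open Complex

theorem diagonal_unitriangular_hexagon {K : Type*} [Field K] {a b c : K} (habc : a * b * c = 1) :
    !![c, 0; 0, c⁻¹] * !![1, -1; 0, 1] * !![b, 0; 0, b⁻¹] * !![1, -1; 0, 1] *
        !![a, 0; 0, a⁻¹] * !![1, -1; 0, 1] =
      !![1, -(1 + (a ^ 2)⁻¹ + c ^ 2); 0, 1] := by
  have ha : a ≠ 0 := left_ne_zero_of_mul (left_ne_zero_of_mul_eq_one habc)
  have hc : c ≠ 0 := right_ne_zero_of_mul_eq_one habc
  obtain rfl : b = (a * c)⁻¹ := by field_simp; linear_combination habc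
  simp only [Matrix.mul_fin_two]
  ext i j
  fin_cases i <;> fin_cases j <;> simp <;> field_simp
  ring

theorem Hmat_eq (W : ℂ) : Hmat W = !![exp (W / 2), 0; 0, (exp (W / 2))⁻¹] := by
  rw [Hmat, exp_neg]

theorem Hmat_Tmat_hexagon {W W' W'' : ℂ} (hsum : W + W' + W'' = 0) :
    Hmat W'' * Tmat * Hmat W' * Tmat * Hmat W * Tmat =
      !![1, -(1 + exp (-W) + exp W''); 0, 1] := by
  have hprod : exp (W / 2) * exp (W' / 2) * exp (W'' / 2) = 1 := by
    rw [← exp_add, ← exp_add, ← exp_zero]; congr 1; linear_combination hsum / 2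
  have hsq (V : ℂ) : exp (V / 2) ^ 2 = exp V := by rw [← exp_nat_mul]; ring_nf
  simp only [Hmat_eq, Tmat, diagonal_unitriangular_hexagon hprod, hsq, exp_neg]

theorem one_add_exp_neg_add_exp_eq_zero {W W'' : ℂ}
    (h : -exp W'' = (-exp W - 1) / -exp W) : 1 + exp (-W) + exp W'' = 0 := by
  have hinv : exp (-W) * exp W = 1 := by rw [← exp_add, neg_add_cancel, exp_zero]
  rw [eq_div_iff (neg_ne_zero.mpr (exp_ne_zero W))] at h
  linear_combination exp (-W) * h - (1 + exp W'') * hinv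

/-- SL(2,ℂ) cocycle condition around a boundary hexagon in the all-odd-parity case:
if `W + W' + W'' = 0` and `z = e^W·(−1)^δ`, `z'' = e^{W''}·(−1)^{δ''}` with `δ = δ'' = 1`
satisfy `z'' = (z−1)/z`, then `H_{W''}·T·H_{W'}·T·H_W·T = I`. -/
theorem stmt16 (W W' W'' z z'' : ℂ)
    (hsum : W + W' + W'' = 0)
    (hz : z = Complex.exp W * (-1 : ℂ) ^ (1 : ℕ))
    (hz'' : z'' = Complex.exp W'' * (-1 : ℂ) ^ (1 : ℕ))
    (hrel : z'' = (z - 1) / z) :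
    Hmat W'' * Tmat * Hmat W' * Tmat * Hmat W * Tmat = 1 := by
  simp only [pow_one, mul_neg_one] at hz hz''
  subst hz hz''
  rw [Hmat_Tmat_hexagon hsum, one_add_exp_neg_add_exp_eq_zero hrel, neg_zero,
    Matrix.one_fin_two]
end

section
/- Let ω, ω', ω'' be complex numbers of modulus 1, none real, with ω·ω'·ω'' = −1, and define z = |Im ω' / Im ω''|·ω, z' = |Im ω'' / Im ω|·ω', z'' = |Im ω / Im ω'|·ω''. If z' = 1/(1−z) and z'' = (z−1)/z, then the imaginary parts of ω, ω', ω'' all have the same sign. Conversely, if Im ω, Im ω', Im ω'' are all positive, writing ω = e^{iα}, ω' = e^{iα'}, ω'' = e^{iα''} with α, α', α'' ∈ (0,π) and α + α' + α'' = π, the numbers z, z', z'' defined above satisfy z' = 1/(1−z) and z'' = (z−1)/z. -/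
/-!
Write `a, b, c` for `ω, ω', ω''`. Since `‖b‖ = 1` and `abc = -1`, we have `ca = -b̄`, hence
`Im (ca) = Im b`, and likewise `Im (ab) = Im c`. With this, the imaginary part of
`z' (1 - z) = 1` reads `Im b = |Im b / Im c| · Im c`, and that of `z'' z = z - 1` reads
`|Im a / Im b| · Im b = Im a`: so `Im a, Im b, Im c` share a sign. Conversely, when the ratios
are positive the absolute values disappear, and the relations follow from the identity
`Im (ab) - Im b · a = Im a · b̄`, a form of the sine rule for the triangle `0, 1, z`.
-/

noncomputable def shp (u v w : ℂ) : ℂ := ((|v.im / w.im| : ℝ) : ℂ) * u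

open ComplexConjugate

lemma eq_neg_conj_of_mul_eq_neg_one {x y : ℂ} (hx : ‖x‖ = 1) (h : x * y = -1) :
    y = -conj x := by
  have hxx : x * conj x = 1 := by simp [Complex.mul_conj', hx]
  linear_combination (-y) * hxx + conj x * h

lemma im_eq_of_mul_eq_neg_one {x y : ℂ} (hx : ‖x‖ = 1) (h : x * y = -1) : y.im = x.im := by
  simp [eq_neg_conj_of_mul_eq_neg_one hx h]

lemma im_mul_sub_im_mul_eq (a b : ℂ) : ((a * b).im : ℂ) - b.im * a = a.im * conj b := by
  apply Complex.ext <;> simp <;> ring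

lemma one_sub_ofReal_mul_ne_zero {p : ℝ} {a : ℂ} (hp : p ≠ 0) (ha : a.im ≠ 0) :
    1 - (p : ℂ) * a ≠ 0 := by
  intro h
  simpa [hp, ha] using congrArg Complex.im h

lemma im_eq_of_mul_eq_one_div_one_sub {p q : ℝ} {a b : ℂ} (hpa : 1 - (p : ℂ) * a ≠ 0)
    (h : (q : ℂ) * b = 1 / (1 - p * a)) : b.im = p * (a * b).im := by
  have h₁ : (q : ℂ) * (b - p * (a * b)) = 1 := by
    linear_combination (1 - p * a) * h + one_div_mul_cancel hpa
  have hq : q ≠ 0 := by rintro rfl; simp at h₁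
  have h₂ : q * (b.im - p * (a * b).im) = 0 := by simpa using congrArg Complex.im h₁
  linarith [(mul_eq_zero.mp h₂).resolve_left hq]

lemma mul_im_eq_of_eq_sub_one_div {p r : ℝ} {a c : ℂ} (hpa : (p : ℂ) * a ≠ 0)
    (h : (r : ℂ) * c = (p * a - 1) / (p * a)) : r * (c * a).im = a.im := by
  have hp : p ≠ 0 := by rintro rfl; simp at hpa
  have h₁ : (p : ℂ) * (r * (c * a) - a) = -1 := by
    linear_combination (p * a) * h + div_mul_cancel₀ ((p : ℂ) * a - 1) hpa
  have h₂ : p * (r * (c * a).im - a.im) = 0 := by simpa using congrArg Complex.im h₁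
  linarith [(mul_eq_zero.mp h₂).resolve_left hp]

lemma mul_pos_of_eq_abs_div_mul {x y : ℝ} (hx : x ≠ 0) (h : x = |x / y| * y) : 0 < x * y := by
  have hy : y ≠ 0 := by rintro rfl; exact hx (by simpa using h)
  have habs : |x / y| = x / y := eq_div_of_mul_eq hy h.symm
  have hxy : 0 < x / y := habs ▸ abs_pos.mpr (div_ne_zero hx hy)
  rcases div_pos_iff.mp hxy with ⟨h₁, h₂⟩ | ⟨h₁, h₂⟩
  · exact mul_pos h₁ h₂
  · exact mul_pos_of_neg_of_neg h₁ h₂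

lemma same_sign_of_mul_pos {x y z : ℝ} (hxy : 0 < x * y) (hyz : 0 < y * z) :
    (0 < x ∧ 0 < y ∧ 0 < z) ∨ (x < 0 ∧ y < 0 ∧ z < 0) := by
  rcases pos_and_pos_or_neg_and_neg_of_mul_pos hxy with ⟨hx, hy⟩ | ⟨hx, hy⟩
  · exact .inl ⟨hx, hy, pos_of_mul_pos_right hyz hy.le⟩
  · exact .inr ⟨hx, hy, neg_of_mul_pos_right hyz hy.le⟩

noncomputable def signedShp (u v w : ℂ) : ℂ := ((v.im / w.im : ℝ) : ℂ) * u

lemma shp_eq_signedShp {u v w : ℂ} (h : 0 ≤ v.im / w.im) : shp u v w = signedShp u v w := by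
  rw [shp, signedShp, abs_of_nonneg h]

section UnitTriple

variable {a b c : ℂ}

lemma same_sign_of_shp_relations (ha : ‖a‖ = 1) (hb : ‖b‖ = 1) (habc : a * b * c = -1)
    (ha0 : a.im ≠ 0) (hb0 : b.im ≠ 0) (hc0 : c.im ≠ 0)
    (h₁ : shp b c a = 1 / (1 - shp a b c)) (h₂ : shp c a b = (shp a b c - 1) / shp a b c) :
    (0 < a.im ∧ 0 < b.im ∧ 0 < c.im) ∨ (a.im < 0 ∧ b.im < 0 ∧ c.im < 0) := by
  have hc : c.im = (a * b).im := im_eq_of_mul_eq_neg_one (by simp [ha, hb]) habc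
  have hb' : (c * a).im = b.im := im_eq_of_mul_eq_neg_one hb (by linear_combination habc)
  have hp : |b.im / c.im| ≠ 0 := (abs_pos.mpr (div_ne_zero hb0 hc0)).ne'
  have ha' : a ≠ 0 := by rintro rfl; simp at ha0
  have hbc : 0 < b.im * c.im := mul_pos_of_eq_abs_div_mul hb0 <|
    (im_eq_of_mul_eq_one_div_one_sub (one_sub_ofReal_mul_ne_zero hp ha0) h₁).trans (by rw [← hc])
  have hab : 0 < a.im * b.im := mul_pos_of_eq_abs_div_mul ha0 <|
    (mul_im_eq_of_eq_sub_one_div (mul_ne_zero (Complex.ofReal_ne_zero.mpr hp) ha') h₂).symm.trans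
      (by rw [hb'])
  exact same_sign_of_mul_pos hab hbc

lemma signedShp_eq_one_div_one_sub (ha : ‖a‖ = 1) (hb : ‖b‖ = 1) (habc : a * b * c = -1)
    (ha0 : a.im ≠ 0) (hc0 : c.im ≠ 0) :
    signedShp b c a = 1 / (1 - signedShp a b c) := by
  have hc : c.im = (a * b).im := im_eq_of_mul_eq_neg_one (by simp [ha, hb]) habc
  have key : (c.im : ℂ) - b.im * a = a.im * conj b := hc ▸ im_mul_sub_im_mul_eq a b
  have hbb : b * conj b = 1 := by simp [Complex.mul_conj', hb]
  have ha0' : (a.im : ℂ) ≠ 0 := by exact_mod_cast ha0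
  have hc0' : (c.im : ℂ) ≠ 0 := by exact_mod_cast hc0
  apply eq_one_div_of_mul_eq_one_left
  simp only [signedShp]
  push_cast
  field_simp
  linear_combination b * key + a.im * hbb

lemma signedShp_eq_sub_one_div (ha : ‖a‖ = 1) (hb : ‖b‖ = 1) (habc : a * b * c = -1)
    (ha0 : a.im ≠ 0) (hb0 : b.im ≠ 0) (hc0 : c.im ≠ 0) :
    signedShp c a b = (signedShp a b c - 1) / signedShp a b c := by
  have hc : c.im = (a * b).im := im_eq_of_mul_eq_neg_one (by simp [ha, hb]) habc
  have key : (c.im : ℂ) - b.im * a = a.im * conj b := hc ▸ im_mul_sub_im_mul_eq a b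
  have hca : c * a = -conj b := eq_neg_conj_of_mul_eq_neg_one hb (by linear_combination habc)
  have ha' : a ≠ 0 := by rintro rfl; simp at ha0
  have hb0' : (b.im : ℂ) ≠ 0 := by exact_mod_cast hb0
  have hc0' : (c.im : ℂ) ≠ 0 := by exact_mod_cast hc0
  rw [eq_div_iff (by simp [signedShp, ha', hb0, hc0])]
  simp only [signedShp]
  push_cast
  field_simp
  linear_combination (a.im : ℂ) * hca + key

end UnitTriple

theorem stmt19_general (ω ω' ω'' : ℂ)
    (habs : ‖ω‖ = 1) (habs' : ‖ω'‖ = 1)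
    (him : ω.im ≠ 0) (him' : ω'.im ≠ 0) (him'' : ω''.im ≠ 0)
    (hprod : ω * ω' * ω'' = -1) :
    ((shp ω' ω'' ω = 1 / (1 - shp ω ω' ω'') ∧
        shp ω'' ω ω' = (shp ω ω' ω'' - 1) / shp ω ω' ω'') →
      ((0 < ω.im ∧ 0 < ω'.im ∧ 0 < ω''.im) ∨ (ω.im < 0 ∧ ω'.im < 0 ∧ ω''.im < 0))) ∧
    ((0 < ω.im ∧ 0 < ω'.im ∧ 0 < ω''.im) →
      (shp ω' ω'' ω = 1 / (1 - shp ω ω' ω'') ∧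
        shp ω'' ω ω' = (shp ω ω' ω'' - 1) / shp ω ω' ω'')) := by
  refine ⟨fun ⟨h₁, h₂⟩ ↦ same_sign_of_shp_relations habs habs' hprod him him' him'' h₁ h₂, ?_⟩
  rintro ⟨hpos, hpos', hpos''⟩
  rw [shp_eq_signedShp (div_pos hpos' hpos'').le, shp_eq_signedShp (div_pos hpos'' hpos).le,
    shp_eq_signedShp (div_pos hpos hpos').le]
  exact ⟨signedShp_eq_one_div_one_sub habs habs' hprod him him'',
    signedShp_eq_sub_one_div habs habs' hprod him him' him''⟩

/-- Let `ω, ω', ω''` be non-real unit complex numbers with `ω·ω'·ω'' = −1`, and let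
`z = |Im ω'/Im ω''|·ω`, `z' = |Im ω''/Im ω|·ω'`, `z'' = |Im ω/Im ω'|·ω''`.
If `z' = 1/(1−z)` and `z'' = (z−1)/z`, then `Im ω, Im ω', Im ω''` all have the same strict
sign; conversely, if they are all positive then the cross-ratio relations hold. -/
theorem stmt19 (ω ω' ω'' : ℂ)
    (habs : ‖ω‖ = 1) (habs' : ‖ω'‖ = 1) (habs'' : ‖ω''‖ = 1)
    (him : ω.im ≠ 0) (him' : ω'.im ≠ 0) (him'' : ω''.im ≠ 0)
    (hprod : ω * ω' * ω'' = -1) :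
    ((shp ω' ω'' ω = 1 / (1 - shp ω ω' ω'') ∧
        shp ω'' ω ω' = (shp ω ω' ω'' - 1) / shp ω ω' ω'') →
      ((0 < ω.im ∧ 0 < ω'.im ∧ 0 < ω''.im) ∨ (ω.im < 0 ∧ ω'.im < 0 ∧ ω''.im < 0))) ∧
    ((0 < ω.im ∧ 0 < ω'.im ∧ 0 < ω''.im) →
      (shp ω' ω'' ω = 1 / (1 - shp ω ω' ω'') ∧
        shp ω'' ω ω' = (shp ω ω' ω'' - 1) / shp ω ω' ω'')) :=
  stmt19_general ω ω' ω'' habs habs' him him' him'' hprod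
end
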